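/- For s ∈ ℝ let G_s^±(u) := e^{i s (u ± 1/u)}/u for u ≠ 0. Then the principal value integrals exist and are given by: P∫_ℝ G_s^+(u) du = 2πi·sgn(s)·J₀(2|s|) and P∫_ℝ G_s^−(u) du = 0; i.e., P∫_ℝ G_s^±(u) du = i(1 ± 1)π·sgn(s)·J₀(2|s|). -/

import Mathlib

/-!
Substituting `u = ±e^t` turns `∫_{I_{R,r}} e^{is(u + ε/u)} / u du` into
`2i ∫_{log r}^{log R} sin (s (e^t + ε e^{-t})) dt`, whose integrand is even in `t` for `ε = 1` and
odd for `ε = -1`; so everything hinges on the limit of `∫_0^c sin (s (e^t + ε e^{-t})) dt`, the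
imaginary part of `∫_0^c Φ` with `Φ(z) = exp (is (e^z + ε e^{-z}))`. For `s > 0`, Cauchy's theorem
on the rectangle `[0, c] × [0, π/2]` trades the real segment for the side `Im z = π/2`, where `Φ` is
real and decays like `e^{-s e^t}`, and the right side, which vanishes as `c → ∞`. What remains is
the left side `i ∫_0^{π/2} Φ(iy) dy`; for `ε = 1` the real part of its integral is Poisson's
`∫_0^{π/2} cos (2s cos y) dy = (π/2) J₀(2s)`.
-/

open MeasureTheory Filter

/-- The 0-th Bessel function of the first kind. -/
noncomputable def J0 (z : ℝ) : ℝ :=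
  ∑' n : ℕ, (-1 : ℝ) ^ n * (z / 2) ^ (2 * n) / ((Nat.factorial n : ℝ)) ^ 2

/-- The symmetric truncated domain `I_{R,r} = [-R,-r] ∪ [r,R]`. -/
def pvSet (R r : ℝ) : Set ℝ := Set.Icc (-R) (-r) ∪ Set.Icc r R

open Real Set Topology

theorem integral_cos_pow_even_pi_div_two (n : ℕ) :
    ∫ y in (0 : ℝ)..π / 2, cos y ^ (2 * n) =
      π / 2 * ((2 * n).factorial / (4 ^ n * (n.factorial : ℝ) ^ 2)) := by
  induction n with
  | zero => simp
  | succ k ih =>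
    rw [Nat.mul_succ, integral_cos_pow, ih, show 2 * k + 2 = 2 * k + 1 + 1 by ring,
      Nat.factorial_succ, Nat.factorial_succ, Nat.factorial_succ]
    push_cast
    simp only [cos_pi_div_two, cos_zero, sin_zero, ne_eq, add_eq_zero, one_ne_zero, and_false,
      not_false_eq_true, zero_pow, zero_mul, mul_zero, sub_self, zero_div, zero_add]
    field_simp
    ring

theorem hasSum_J0 (z : ℝ) :
    HasSum (fun n : ℕ => (-1 : ℝ) ^ n * (z / 2) ^ (2 * n) / (n.factorial : ℝ) ^ 2) (J0 z) := by
  refine (Summable.of_norm_bounded (Real.summable_pow_div_factorial ((z / 2) ^ 2))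
    fun n => ?_).hasSum
  have h1 : (1 : ℝ) ≤ n.factorial := by exact_mod_cast n.factorial_pos
  rw [norm_div, norm_mul, norm_pow, norm_neg, norm_one, one_pow, one_mul, norm_pow, norm_pow,
    Real.norm_natCast, Real.norm_eq_abs, pow_mul, sq_abs]
  gcongr
  nlinarith

theorem integral_cos_mul_cos_eq_J0 (x : ℝ) :
    ∫ y in (0 : ℝ)..π / 2, cos (x * cos y) = π / 2 * J0 x := by
  have hterm : ∀ n : ℕ, ∫ y in (0 : ℝ)..π / 2, (-1) ^ n * (x * cos y) ^ (2 * n) / (2 * n).factorial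
      = π / 2 * ((-1 : ℝ) ^ n * (x / 2) ^ (2 * n) / (n.factorial : ℝ) ^ 2) := by
    intro n
    have : ∀ y, (-1) ^ n * (x * cos y) ^ (2 * n) / (2 * n).factorial
        = (-1) ^ n * x ^ (2 * n) / (2 * n).factorial * cos y ^ (2 * n) := fun y => by ring
    simp_rw [this, intervalIntegral.integral_const_mul, integral_cos_pow_even_pi_div_two, div_pow,
      pow_mul]
    field_simp
    norm_num
  refine HasSum.unique ?_ ((hasSum_J0 x).mul_left (π / 2))
  simp_rw [← hterm]
  refine intervalIntegral.hasSum_integral_of_dominated_convergence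
    (fun n _ => |x| ^ (2 * n) / (2 * n).factorial) (fun n => by fun_prop) ?_ ?_ ?_ ?_
  · refine fun n => ae_of_all _ fun y _ => ?_
    rw [norm_div, norm_mul, norm_pow, norm_neg, norm_one, one_pow, one_mul, norm_pow,
      Real.norm_natCast, norm_mul, Real.norm_eq_abs, Real.norm_eq_abs]
    gcongr
    exact mul_le_of_le_one_right (abs_nonneg x) (abs_cos_le_one y)
  · refine ae_of_all _ fun y _ => ?_
    refine Summable.of_nonneg_of_le (fun n => by positivity) (fun n => ?_)
      (Real.summable_pow_div_factorial (x ^ 2))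
    rw [pow_mul, sq_abs]
    gcongr
    omega
  · exact intervalIntegrable_const
  · exact ae_of_all _ fun y _ => Real.hasSum_cos (x * cos y)

theorem setIntegral_pvSet {E : Type*} [NormedAddCommGroup E] [NormedSpace ℝ E] {F : ℝ → E}
    (hF : ContinuousOn F {0}ᶜ) {R r : ℝ} (hr : 0 < r) (hrR : r ≤ R) :
    ∫ u in pvSet R r, F u = ∫ u in r..R, (F u + F (-u)) := by
  have hpos : Icc r R ⊆ {0}ᶜ := fun u hu => ne_of_gt (hr.trans_le hu.1)
  have hneg : Icc (-R) (-r) ⊆ {0}ᶜ := fun u hu => ne_of_lt (hu.2.trans_lt (neg_neg_of_pos hr))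
  have hdisj : Disjoint (Icc (-R) (-r)) (Icc r R) :=
    disjoint_left.2 fun u hu hu' => by linarith [hu.2, hu'.1]
  have hneg_int : IntervalIntegrable (fun u => F (-u)) volume r R :=
    ((hF.mono hneg).comp continuousOn_neg fun u hu => ⟨neg_le_neg hu.2, neg_le_neg hu.1⟩)
      |>.intervalIntegrable_of_Icc hrR
  rw [pvSet, setIntegral_union hdisj measurableSet_Icc (hF.mono hneg).integrableOn_Icc
    (hF.mono hpos).integrableOn_Icc, intervalIntegral.integral_add
    ((hF.mono hpos).intervalIntegrable_of_Icc hrR) hneg_int, intervalIntegral.integral_comp_neg,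
    intervalIntegral.integral_of_le hrR, intervalIntegral.integral_of_le (neg_le_neg hrR),
    integral_Icc_eq_integral_Ioc, integral_Icc_eq_integral_Ioc, add_comm]

theorem integral_pvSet_div {g : ℝ → ℂ} (hg : ContinuousOn g {0}ᶜ) {R r : ℝ} (hr : 0 < r)
    (hrR : r ≤ R) :
    ∫ u in pvSet R r, g u / u = ∫ t in log r..log R, (g (exp t) - g (-exp t)) := by
  have hdiv : ContinuousOn (fun u : ℝ => g u / u) {0}ᶜ :=
    hg.div (Complex.continuous_ofReal.continuousOn) fun u hu => Complex.ofReal_ne_zero.2 hu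
  rw [setIntegral_pvSet hdiv hr hrR, ← exp_log hr, ← exp_log (hr.trans_le hrR),
    ← intervalIntegral.integral_deriv_smul_comp_of_deriv_nonneg (f := exp) (f' := exp)
      continuous_exp.continuousOn (fun t _ => hasDerivAt_exp t) (fun t _ => (exp_pos t).le),
    exp_log hr, exp_log (hr.trans_le hrR)]
  refine intervalIntegral.integral_congr fun t _ => ?_
  simp only [Function.comp_apply, Complex.real_smul, Complex.ofReal_neg]
  field_simp
  ring

open Complex

/-- `expPhase s ε z = exp (i s (u + ε / u))` for `u = e^z`. -/
noncomputable def expPhase (s ε : ℝ) (z : ℂ) : ℂ :=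
  Complex.exp (I * s * (Complex.exp z + ε * Complex.exp (-z)))

section expPhase

variable (s ε : ℝ)

theorem differentiable_expPhase : Differentiable ℂ (expPhase s ε) := by
  unfold expPhase; fun_prop

theorem Continuous.expPhase {α : Type*} [TopologicalSpace α] {g : α → ℂ} (hg : Continuous g) :
    Continuous fun x => expPhase s ε (g x) :=
  (differentiable_expPhase s ε).continuous.comp hg

theorem expPhase_ofReal (t : ℝ) :
    expPhase s ε t = Complex.exp ((s * (Real.exp t + ε * Real.exp (-t)) : ℝ) * I) := by
  simp only [expPhase, ofReal_mul, ofReal_add, ofReal_exp, ofReal_neg]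
  ring_nf

theorem expPhase_add_pi_div_two_mul_I (t : ℝ) :
    expPhase s ε (t + π / 2 * I) = (Real.exp (-(s * (Real.exp t - ε * Real.exp (-t)))) : ℝ) := by
  rw [expPhase, neg_add, Complex.exp_add, Complex.exp_add, exp_pi_div_two_mul_I, ← neg_mul,
    ← neg_div, exp_neg_pi_div_two_mul_I]
  push_cast
  congr 1
  linear_combination (s * (Complex.exp t - ε * Complex.exp (-t)) : ℂ) * I_sq

theorem norm_expPhase (b y : ℝ) :
    ‖expPhase s ε (b + y * I)‖
      = Real.exp (-(s * (Real.exp b - ε * Real.exp (-b)) * Real.sin y)) := by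
  rw [expPhase, Complex.norm_exp]
  congr 1
  simp only [neg_add_rev, ← ofReal_neg, mul_re, mul_im, add_re, add_im, I_re, I_im, ofReal_re,
    ofReal_im, exp_re, exp_im, neg_re, neg_im, Real.cos_neg, Real.sin_neg, mul_zero, zero_mul,
    mul_one, one_mul, mul_neg, sub_self, sub_zero, zero_sub, add_zero, zero_add, neg_zero]
  ring

theorem re_expPhase_one_mul_I (y : ℝ) :
    (expPhase s 1 (y * I)).re = Real.cos (2 * s * Real.cos y) := by
  have : expPhase s 1 (y * I) = Complex.exp ((2 * s * Real.cos y : ℝ) * I) := by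
    rw [expPhase, ← neg_mul, ofReal_one, one_mul, ← two_cos, ← ofReal_cos]
    push_cast
    ring_nf
  rw [this, exp_ofReal_mul_I_re]

end expPhase

theorem integral_eq_shifted_add_vertical_sides {f : ℂ → ℂ} (hf : Differentiable ℂ f) (a b h : ℝ) :
    ∫ t in a..b, f t = (∫ t in a..b, f (t + h * I)) - I * (∫ y in (0 : ℝ)..h, f (b + y * I))
      + I * ∫ y in (0 : ℝ)..h, f (a + y * I) := by
  have := integral_boundary_rect_eq_zero_of_differentiableOn f a (b + h * I) hf.differentiableOn
  simp only [ofReal_re, ofReal_im, add_re, add_im, mul_re, mul_im, I_re, I_im, ofReal_zero,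
    mul_zero, mul_one, zero_mul, sub_self, add_zero, zero_add, smul_eq_mul] at this
  linear_combination this

theorem le_exp_sub_mul_exp_neg {ε t : ℝ} (hε : ε ≤ 1) (ht : 0 ≤ t) :
    t ≤ Real.exp t - ε * Real.exp (-t) := by
  have h1 : ε * Real.exp (-t) ≤ 1 :=
    calc ε * Real.exp (-t) ≤ 1 * Real.exp (-t) := by gcongr
      _ ≤ 1 := by simpa using Real.exp_le_one_iff.2 (neg_nonpos.2 ht)
  linarith [add_one_le_exp t]

section positive

variable {s ε : ℝ} (hs : 0 < s) (hε : ε ≤ 1)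
include hs hε

theorem integrableOn_exp_neg_mul_exp_sub :
    IntegrableOn (fun t => Real.exp (-(s * (Real.exp t - ε * Real.exp (-t))))) (Ioi 0) := by
  refine (exp_neg_integrableOn_Ioi 0 hs).mono' (by fun_prop) ?_
  filter_upwards [ae_restrict_mem measurableSet_Ioi] with t ht
  rw [Real.norm_of_nonneg (Real.exp_nonneg _), Real.exp_le_exp, neg_mul, neg_le_neg_iff]
  exact mul_le_mul_of_nonneg_left (le_exp_sub_mul_exp_neg hε (le_of_lt ht)) hs.le

theorem tendsto_integral_expPhase_vertical :
    Tendsto (fun b : ℝ => ∫ y in (0 : ℝ)..π / 2, expPhase s ε (b + y * I)) atTop (𝓝 0) := by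
  have hk : Tendsto (fun b => s * (Real.exp b - ε * Real.exp (-b))) atTop atTop :=
    (tendsto_atTop_mono' _ ((eventually_ge_atTop 0).mono fun b => le_exp_sub_mul_exp_neg hε)
      tendsto_id).const_mul_atTop hs
  have hsin : ∀ y ∈ uIoc (0 : ℝ) (π / 2), 0 < Real.sin y := fun y hy => by
    rw [uIoc_of_le (by positivity)] at hy
    exact sin_pos_of_pos_of_lt_pi hy.1 (by linarith [hy.2, pi_pos])
  have hbound : ∀ᶠ b : ℝ in atTop,
      ∀ᵐ y, y ∈ uIoc 0 (π / 2) → ‖expPhase s ε (b + y * I)‖ ≤ 1 := by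
    filter_upwards [hk.eventually_ge_atTop 0] with b hb
    refine ae_of_all _ fun y hy => ?_
    rw [norm_expPhase, Real.exp_le_one_iff, neg_nonpos]
    exact mul_nonneg hb (hsin y hy).le
  have hlim : ∀ᵐ y, y ∈ uIoc 0 (π / 2) →
      Tendsto (fun b : ℝ => expPhase s ε (b + y * I)) atTop (𝓝 0) := by
    refine ae_of_all _ fun y hy => ?_
    rw [tendsto_zero_iff_norm_tendsto_zero]
    simp only [norm_expPhase]
    exact tendsto_exp_neg_atTop_nhds_zero.comp (hk.atTop_mul_const (hsin y hy))
  simpa using intervalIntegral.tendsto_integral_filter_of_dominated_convergence (fun _ => 1)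
    (Eventually.of_forall fun b => (Continuous.expPhase s ε (by fun_prop)).aestronglyMeasurable)
    hbound intervalIntegrable_const hlim

theorem tendsto_integral_expPhase :
    Tendsto (fun c : ℝ => ∫ t in (0 : ℝ)..c, expPhase s ε t) atTop
      (𝓝 ((∫ t in Ioi 0, Real.exp (-(s * (Real.exp t - ε * Real.exp (-t)))) : ℝ)
        + I * ∫ y in (0 : ℝ)..π / 2, expPhase s ε (y * I))) := by
  have hrect : ∀ c : ℝ, ∫ t in (0 : ℝ)..c, expPhase s ε t
      = ((∫ t in (0 : ℝ)..c, Real.exp (-(s * (Real.exp t - ε * Real.exp (-t)))) : ℝ) : ℂ)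
        - I * (∫ y in (0 : ℝ)..π / 2, expPhase s ε (c + y * I))
        + I * ∫ y in (0 : ℝ)..π / 2, expPhase s ε (y * I) := fun c => by
    rw [integral_eq_shifted_add_vertical_sides (differentiable_expPhase s ε) 0 c (π / 2),
      ofReal_zero]
    simp only [ofReal_div, ofReal_ofNat, expPhase_add_pi_div_two_mul_I, zero_add,
      intervalIntegral.integral_ofReal]
  have htop := (continuous_ofReal.tendsto _).comp <| intervalIntegral_tendsto_integral_Ioi 0
    (integrableOn_exp_neg_mul_exp_sub hs hε) tendsto_id
  simpa only [hrect, sub_zero, mul_zero, Function.comp_def, id] using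
    (htop.sub ((tendsto_integral_expPhase_vertical hs hε).const_mul I)).add_const
      (I * ∫ y in (0 : ℝ)..π / 2, expPhase s ε (y * I))

theorem tendsto_integral_sin_of_pos :
    Tendsto (fun c : ℝ => ∫ t in (0 : ℝ)..c, Real.sin (s * (Real.exp t + ε * Real.exp (-t))))
      atTop (𝓝 (∫ y in (0 : ℝ)..π / 2, (expPhase s ε (y * I)).re)) := by
  have him : ∀ c : ℝ, (∫ t in (0 : ℝ)..c, expPhase s ε t).im
      = ∫ t in (0 : ℝ)..c, Real.sin (s * (Real.exp t + ε * Real.exp (-t))) := fun c => by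
    simp_rw [← Complex.imCLM_apply, ← imCLM.intervalIntegral_comp_comm
      ((Continuous.expPhase s ε continuous_ofReal).intervalIntegrable 0 c), imCLM_apply,
      expPhase_ofReal, exp_ofReal_mul_I_im]
  have hre : (∫ y in (0 : ℝ)..π / 2, expPhase s ε (y * I)).re
      = ∫ y in (0 : ℝ)..π / 2, (expPhase s ε (y * I)).re :=
    (reCLM.intervalIntegral_comp_comm (f := fun y : ℝ => expPhase s ε (y * I))
      ((Continuous.expPhase s ε (by fun_prop)).intervalIntegrable _ _)).symm
  simpa [Function.comp_def, him, hre] using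
    (continuous_im.tendsto _).comp (tendsto_integral_expPhase hs hε)

end positive

theorem tendsto_integral_sin {ε : ℝ} (s : ℝ) (hε : ε ≤ 1) :
    Tendsto (fun c : ℝ => ∫ t in (0 : ℝ)..c, Real.sin (s * (Real.exp t + ε * Real.exp (-t))))
      atTop (𝓝 (Real.sign s * ∫ y in (0 : ℝ)..π / 2, (expPhase |s| ε (y * I)).re)) := by
  rcases lt_trichotomy s 0 with hs | rfl | hs
  · have := (tendsto_integral_sin_of_pos (neg_pos.2 hs) hε).neg
    simp only [neg_mul, Real.sin_neg, intervalIntegral.integral_neg, neg_neg] at this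
    rwa [Real.sign_of_neg hs, abs_of_neg hs, neg_one_mul]
  · simp
  · simpa [Real.sign_of_pos hs, abs_of_pos hs] using tendsto_integral_sin_of_pos hs hε

theorem tendsto_intervalIntegral_of_comp_neg {f : ℝ → ℝ} (hf : Continuous f) {σ ℓ : ℝ}
    (hσ : ∀ t, f (-t) = σ * f t) (hℓ : Tendsto (fun c => ∫ t in (0 : ℝ)..c, f t) atTop (𝓝 ℓ))
    {ι : Type*} {l : Filter ι} {a b : ι → ℝ} (ha : Tendsto a l atBot) (hb : Tendsto b l atTop) :
    Tendsto (fun i => ∫ t in a i..b i, f t) l (𝓝 ((σ + 1) * ℓ)) := by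
  have hsplit : ∀ i, ∫ t in a i..b i, f t
      = σ * (∫ t in (0 : ℝ)..-a i, f t) + ∫ t in (0 : ℝ)..b i, f t := fun i => by
    rw [← intervalIntegral.integral_add_adjacent_intervals (hf.intervalIntegrable _ 0)
      (hf.intervalIntegrable 0 _), ← intervalIntegral.integral_const_mul]
    simp_rw [← hσ]
    rw [intervalIntegral.integral_comp_neg, neg_neg, neg_zero]
  simp_rw [hsplit, add_mul, one_mul]
  exact ((hℓ.comp (tendsto_neg_atBot_atTop.comp ha)).const_mul σ).add (hℓ.comp hb)

theorem integral_pvSet_exp_div (s ε : ℝ) {R r : ℝ} (hr : 0 < r) (hrR : r ≤ R) :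
    ∫ u in pvSet R r, Complex.exp (I * s * (u + ε / u)) / u
      = 2 * I * (∫ t in Real.log r..Real.log R,
          Real.sin (s * (Real.exp t + ε * Real.exp (-t))) : ℝ) := by
  rw [integral_pvSet_div (by fun_prop (disch := exact fun u hu => ofReal_ne_zero.2 hu)) hr hrR,
    ← intervalIntegral.integral_ofReal, ← intervalIntegral.integral_const_mul]
  refine intervalIntegral.integral_congr fun t _ => ?_
  have hphase : I * s * ((Real.exp t : ℂ) + ε / (Real.exp t : ℂ))
      = (s * (Real.exp t + ε * Real.exp (-t)) : ℝ) * I := by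
    rw [Real.exp_neg]
    push_cast
    field_simp
  simp only [ofReal_neg, ← neg_add, div_neg, mul_neg, hphase, ← neg_mul, exp_mul_I,
    Complex.cos_neg, Complex.sin_neg, ← ofReal_sin]
  ring

theorem tendsto_integral_pvSet_exp_div {s ε σ ℓ : ℝ}
    (hσ : ∀ t, Real.sin (s * (Real.exp (-t) + ε * Real.exp t))
      = σ * Real.sin (s * (Real.exp t + ε * Real.exp (-t))))
    (hℓ : Tendsto (fun c : ℝ => ∫ t in (0 : ℝ)..c, Real.sin (s * (Real.exp t + ε * Real.exp (-t))))
      atTop (𝓝 ℓ)) :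
    Tendsto (fun p : ℝ × ℝ => ∫ u in pvSet p.1 p.2, Complex.exp (I * s * (u + ε / u)) / u)
      (atTop ×ˢ 𝓝[>] 0) (𝓝 (2 * I * ((σ + 1) * ℓ : ℝ))) := by
  have hR : Tendsto (fun p : ℝ × ℝ => Real.log p.1) (atTop ×ˢ 𝓝[>] 0) atTop :=
    tendsto_log_atTop.comp tendsto_fst
  have hr : Tendsto (fun p : ℝ × ℝ => Real.log p.2) (atTop ×ˢ 𝓝[>] 0) atBot :=
    tendsto_log_nhdsGT_zero.comp tendsto_snd
  have hpos : ∀ᶠ p : ℝ × ℝ in atTop ×ˢ 𝓝[>] 0, 0 < p.2 ∧ p.2 ≤ p.1 := by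
    filter_upwards [(eventually_ge_atTop 1).prod_mk (Ioo_mem_nhdsGT one_pos)] with p hp
    exact ⟨hp.2.1, hp.2.2.le.trans hp.1⟩
  refine (((continuous_ofReal.tendsto _).comp (tendsto_intervalIntegral_of_comp_neg
    (by fun_prop) (by simpa only [neg_neg] using hσ) hℓ hr hR)).const_mul (2 * I)).congr' ?_
  filter_upwards [hpos] with p hp
  exact (integral_pvSet_exp_div s ε hp.1 hp.2).symm

/-- the principal value integrals of `G_s^±(u) = e^{is(u ± 1/u)}/u` exist
and equal `i(1 ± 1)π sgn(s) J₀(2|s|)`, i.e. `P∫ G_s^+ = 2πi sgn(s) J₀(2|s|)` and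
`P∫ G_s^- = 0`. -/
theorem pv_integral_Gpm (s : ℝ) :
    Tendsto (fun Rr : ℝ × ℝ =>
        ∫ u in pvSet Rr.1 Rr.2,
          Complex.exp (Complex.I * (s : ℂ) * ((u : ℂ) + 1 / (u : ℂ))) / (u : ℂ))
      ((atTop : Filter ℝ) ×ˢ nhdsWithin 0 (Set.Ioi 0))
      (nhds (Complex.I * ((2 * Real.pi * Real.sign s * J0 (2 * |s|) : ℝ) : ℂ))) ∧
    Tendsto (fun Rr : ℝ × ℝ =>
        ∫ u in pvSet Rr.1 Rr.2,
          Complex.exp (Complex.I * (s : ℂ) * ((u : ℂ) - 1 / (u : ℂ))) / (u : ℂ))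
      ((atTop : Filter ℝ) ×ˢ nhdsWithin 0 (Set.Ioi 0)) (nhds 0) := by
  constructor
  · have := tendsto_integral_pvSet_exp_div (ε := 1) (σ := 1) (fun t => by rw [add_comm]; ring_nf)
      (tendsto_integral_sin s le_rfl)
    simp_rw [re_expPhase_one_mul_I, integral_cos_mul_cos_eq_J0] at this
    convert this using 2
    · simp
    · push_cast; ring
  · have := tendsto_integral_pvSet_exp_div (ε := -1) (σ := -1)
      (fun t => by rw [neg_one_mul (Real.sin _), ← Real.sin_neg]; ring_nf)
      (tendsto_integral_sin s (by norm_num))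
    convert this using 2
    · simp [sub_eq_add_neg, neg_div]
    · simp
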